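/- Let Φ = {φ₁, ..., φ_m} be a self-similar system on ℝ^N with scaling ratios λ_i, let X be its attractor, and let Ω be an osculating set for Φ. Set R := Ω \ (∪_{i=1}^m φ_i(Ω)). Then for all ε ≥ 0, the relative tube function satisfies V_{X,Ω}(ε) = Σ_{i=1}^m λ_i^N · V_{X,Ω}(ε/λ_i) + V_{X,R}(ε). -/
import Mathlib


open Set MeasureTheory Metric Pointwise

/-- Open ε-neighborhood of a set `X ⊆ ℝ^N`. -/
def nbhd {N : ℕ} (X : Set (EuclideanSpace ℝ (Fin N))) (ε : ℝ) :
    Set (EuclideanSpace ℝ (Fin N)) :=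
  {y | ∃ x ∈ X, ‖y - x‖ < ε}

/-- The relative tube function `V_{X,A}(ε) = m(X_ε ∩ A)`. -/
noncomputable def tubeFun {N : ℕ} (X A : Set (EuclideanSpace ℝ (Fin N))) (ε : ℝ) : ENNReal :=
  volume (nbhd X ε ∩ A)

variable {N : ℕ}
local notation "E" => EuclideanSpace ℝ (Fin N)

lemma sim_rep (f : E → E) (r : ℝ) (hr : 0 < r)
    (hf : ∀ x y, dist (f x) (f y) = r * dist x y) :
    ∃ L : E ≃ₗᵢ[ℝ] E, ∀ x, f x = r • L x + f 0 := by
  set g : E → E := fun x => r⁻¹ • (f x - f 0) with hgdef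
  have hg : Isometry g := by
    refine Isometry.of_dist_eq fun x y => ?_
    have h1 : g x - g y = r⁻¹ • (f x - f y) := by
      simp only [hgdef, ← smul_sub]; congr 1; abel
    rw [dist_eq_norm, h1, norm_smul, ← dist_eq_norm, hf,
      Real.norm_eq_abs, abs_of_pos (inv_pos.2 hr), inv_mul_cancel_left₀ hr.ne']
  have hg0 : g 0 = 0 := by simp [hgdef]
  set A := hg.affineIsometryOfStrictConvexSpace with hA
  have hAg : ∀ x, g x = A.linearIsometry x := by
    intro x
    have := A.map_vadd (0 : E) x
    simpa [hA, hg0] using this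
  refine ⟨A.linearIsometry.toLinearIsometryEquiv rfl, fun x => ?_⟩
  have : r • g x = f x - f 0 := by
    rw [hgdef]; simp [smul_smul, mul_inv_cancel₀ hr.ne']
  have h2 : (A.linearIsometry.toLinearIsometryEquiv rfl : E → E) x = g x := by
    rw [hAg x]; rfl
  rw [h2, this]; abel

lemma vol_image_sim (f : E → E) (r : ℝ) (hr : 0 < r)
    (hf : ∀ x y, dist (f x) (f y) = r * dist x y)
    (s : Set E) (hs : MeasurableSet s) :
    volume (f '' s) = ENNReal.ofReal (r ^ N) * volume s := by
  obtain ⟨L, hL⟩ := sim_rep f r hr hf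
  have himg : f '' s = (· + f 0) '' (r • (L '' s)) := by
    rw [← Set.image_smul, Set.image_image, Set.image_image]
    exact Set.image_congr fun x _ => (hL x).symm ▸ rfl
  have hLs : volume ((L : E → E) '' s) = volume s := by
    have himg2 : (L : E → E) '' s = ⇑L.symm ⁻¹' s := by
      ext y
      constructor
      · rintro ⟨x, hx, rfl⟩; simpa using hx
      · intro hy; exact ⟨L.symm y, hy, by simp⟩
    rw [himg2]
    exact L.symm.measurePreserving.measure_preimage hs.nullMeasurableSet
  rw [himg, Set.image_add_right, measure_preimage_add_right, Measure.addHaar_smul,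
    finrank_euclideanSpace_fin, abs_of_nonneg (pow_nonneg hr.le N), hLs]

lemma isOpen_image_sim (f : E → E) (r : ℝ) (hr : 0 < r)
    (hf : ∀ x y, dist (f x) (f y) = r * dist x y)
    (s : Set E) (hs : IsOpen s) : IsOpen (f '' s) := by
  obtain ⟨L, hL⟩ := sim_rep f r hr hf
  have himg : f '' s = (· + f 0) '' (r • (L '' s)) := by
    rw [← Set.image_smul, Set.image_image, Set.image_image]
    exact Set.image_congr fun x _ => (hL x).symm ▸ rfl
  rw [himg]
  exact (Homeomorph.addRight (f 0)).isOpenMap _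
    ((L.toHomeomorph.isOpenMap _ hs).smul₀ hr.ne')

lemma isOpen_nbhd (X : Set E) (ε : ℝ) : IsOpen (nbhd X ε) := by
  have : nbhd X ε = ⋃ x ∈ X, Metric.ball x ε := by
    ext y; simp [nbhd, Metric.mem_ball, dist_eq_norm]
  rw [this]; exact isOpen_biUnion fun _ _ => Metric.isOpen_ball


/-- SFE of a self-similar system: if `X` is the attractor of a self-similar system
`Φ = {φᵢ}` with ratios `λᵢ` and `Ω` is an osculating set for `Φ`, then with
`R = Ω \ ∪ᵢ φᵢ(Ω)` the tube function satisfies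
`V_{X,Ω}(ε) = Σᵢ λᵢ^N V_{X,Ω}(ε/λᵢ) + V_{X,R}(ε)`. -/
theorem sfe_of_selfSimilarSystem {N : ℕ} (m : ℕ) (hm : 1 ≤ m)
    (φ : Fin m → EuclideanSpace ℝ (Fin N) → EuclideanSpace ℝ (Fin N))
    (lam : Fin m → ℝ) (hlam : ∀ i, lam i ∈ Ioo (0 : ℝ) 1)
    (hφ : ∀ i x y, dist (φ i x) (φ i y) = lam i * dist x y)
    (X : Set (EuclideanSpace ℝ (Fin N))) (hXne : X.Nonempty) (hXcp : IsCompact X)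
    (hattr : X = ⋃ i, φ i '' X)
    (Ω : Set (EuclideanSpace ℝ (Fin N))) (hΩopen : IsOpen Ω) (hΩfin : volume Ω ≠ ⊤)
    (hsub : (⋃ i, φ i '' Ω) ⊆ Ω)
    (hdisj : ∀ i j, i ≠ j → φ i '' Ω ∩ φ j '' Ω = ∅)
    (hXΩ : ∃ δ > (0 : ℝ), X ⊆ nbhd Ω δ)
    (hosc : ∀ i, ∀ y ∈ φ i '' Ω, infDist y X = infDist y (φ i '' X))
    (R : Set (EuclideanSpace ℝ (Fin N))) (hRdef : R = Ω \ ⋃ i, φ i '' Ω)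
    (ε : ℝ) (hε : 0 ≤ ε) :
    tubeFun X Ω ε
      = (∑ i, ENNReal.ofReal (lam i ^ N) * tubeFun X Ω (ε / lam i)) + tubeFun X R ε := by
  have hlampos : ∀ i, 0 < lam i := fun i => (hlam i).1
  have hopen_im : ∀ i, IsOpen (φ i '' Ω) := fun i =>
    isOpen_image_sim (φ i) (lam i) (hlampos i) (hφ i) Ω hΩopen
  -- key set identity
  have key : ∀ i, nbhd X ε ∩ φ i '' Ω = φ i '' (nbhd X (ε / lam i) ∩ Ω) := by
    intro i
    ext y
    constructor
    · rintro ⟨hyE, w, hw, rfl⟩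
      obtain ⟨x, hx, hlt⟩ := hyE
      have infd1 : infDist (φ i w) X < ε :=
        (infDist_le_dist_of_mem hx).trans_lt (by rwa [dist_eq_norm])
      have infd2 : infDist (φ i w) (φ i '' X) < ε := by
        rw [← hosc i _ ⟨w, hw, rfl⟩]; exact infd1
      obtain ⟨x', hx', hd⟩ := (infDist_lt_iff (hXne.image _)).1 infd2
      obtain ⟨x₀, hx₀, rfl⟩ := hx'
      rw [hφ] at hd
      have hwd : dist w x₀ < ε / lam i := by
        rw [lt_div_iff₀ (hlampos i)]
        rw [mul_comm] at hd
        exact hd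
      exact ⟨w, ⟨⟨x₀, hx₀, by rwa [← dist_eq_norm]⟩, hw⟩, rfl⟩
    · rintro ⟨w, ⟨⟨x₀, hx₀, hwx⟩, hw⟩, rfl⟩
      refine ⟨⟨φ i x₀, ?_, ?_⟩, w, hw, rfl⟩
      · rw [hattr]; exact mem_iUnion.2 ⟨i, ⟨x₀, hx₀, rfl⟩⟩
      · rw [← dist_eq_norm, hφ]
        calc lam i * dist w x₀ < lam i * (ε / lam i) := by
              apply mul_lt_mul_of_pos_left _ (hlampos i)
              rwa [dist_eq_norm]
          _ = ε := mul_div_cancel₀ ε (hlampos i).ne'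
  -- decomposition of Ω
  have hdecomp : nbhd X ε ∩ Ω = (⋃ i, nbhd X ε ∩ φ i '' Ω) ∪ (nbhd X ε ∩ R) := by
    rw [hRdef, ← inter_iUnion, ← inter_union_distrib_left, union_diff_cancel hsub]
  have hmeasU : ∀ i, MeasurableSet (nbhd X ε ∩ φ i '' Ω) := fun i =>
    ((isOpen_nbhd X ε).inter (hopen_im i)).measurableSet
  have hmeasR : MeasurableSet (nbhd X ε ∩ R) := by
    rw [hRdef]
    exact ((isOpen_nbhd X ε).measurableSet).inter
      (hΩopen.measurableSet.diff (isOpen_iUnion hopen_im).measurableSet)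
  have hdisjRU : Disjoint (⋃ i, nbhd X ε ∩ φ i '' Ω) (nbhd X ε ∩ R) := by
    rw [hRdef]
    refine Set.disjoint_left.2 ?_
    rintro y hy ⟨-, -, hy2⟩
    obtain ⟨i, -, hyi⟩ := mem_iUnion.1 hy
    exact hy2 (mem_iUnion.2 ⟨i, hyi⟩)
  have hpw : Pairwise (Function.onFun Disjoint fun i => nbhd X ε ∩ φ i '' Ω) := by
    intro i j hij
    refine Set.disjoint_left.2 ?_
    rintro y ⟨-, hyi⟩ ⟨-, hyj⟩
    have := hdisj i j hij
    exact absurd (Set.mem_inter hyi hyj) (by rw [this]; exact notMem_empty y)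
  have hsum : volume (nbhd X ε ∩ Ω)
      = (∑ i, volume (nbhd X ε ∩ φ i '' Ω)) + volume (nbhd X ε ∩ R) := by
    rw [hdecomp, measure_union hdisjRU hmeasR, measure_iUnion hpw hmeasU, tsum_fintype]
  have hterm : ∀ i, volume (nbhd X ε ∩ φ i '' Ω)
      = ENNReal.ofReal (lam i ^ N) * tubeFun X Ω (ε / lam i) := by
    intro i
    rw [key i]
    exact vol_image_sim (φ i) (lam i) (hlampos i) (hφ i) _
      ((isOpen_nbhd X (ε / lam i)).inter hΩopen).measurableSet
  calc tubeFun X Ω ε = volume (nbhd X ε ∩ Ω) := rfl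
    _ = (∑ i, volume (nbhd X ε ∩ φ i '' Ω)) + volume (nbhd X ε ∩ R) := hsum
    _ = (∑ i, ENNReal.ofReal (lam i ^ N) * tubeFun X Ω (ε / lam i)) + tubeFun X R ε := by
        rw [Finset.sum_congr rfl fun i _ => hterm i]; rfl
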